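/- arXiv:1909.12830 — 2 statements merged into one kernel-verified Lean document; each statement's English description precedes it below -/
import Mathlib

section
/- Let n ≥ 1, let k be an integer with 0 < k < n, and let x ∈ ℝⁿ have pairwise distinct coordinates. For each τ > 0, let ν*(τ) be the unique real number with Σᵢ σ((xᵢ + ν*(τ))/τ) = k. Let a be the k-th largest coordinate of x and b the (k+1)-th largest coordinate of x (so b < a). Then for all sufficiently small τ > 0, one has b < −ν*(τ) < a. -/
open Finset Filter

/-- The sigmoid function `σ(t) = 1 / (1 + exp (-t))`. -/
noncomputable def sigmoid (t : ℝ) : ℝ := 1 / (1 + Real.exp (-t))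

/-!
As `τ → 0⁺`, `σ((xᵢ - c)/τ)` tends to `1`, `1/2` or `0` according as `xᵢ > c`, `xᵢ = c` or
`xᵢ < c`. Hence, at a coordinate `c = x_{i₀}`, the sum `S_τ(c) = ∑ᵢ σ((xᵢ - c)/τ)` tends to
`#{j | c < xⱼ} + 1/2`, which is `k - 1/2` at `c = a` and `k + 1/2` at `c = b`. So for small `τ`,
`S_τ(a) < k = S_τ(-ν τ) < S_τ(b)`, and since `S_τ` is antitone this forces `b < -ν τ < a`.
-/

open Topology

theorem sigmoid_eq_real_sigmoid : sigmoid = Real.sigmoid :=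
  funext fun t => by rw [sigmoid, Real.sigmoid_def, one_div]

theorem sigmoid_monotone : Monotone sigmoid :=
  sigmoid_eq_real_sigmoid ▸ Real.sigmoid_strictMono.monotone

theorem tendsto_sigmoid_div_nhdsGT_zero (c : ℝ) :
    Tendsto (fun τ => sigmoid (c / τ)) (𝓝[>] 0)
      (𝓝 ((if 0 < c then 1 else 0) + (if c = 0 then 1 / 2 else 0))) := by
  rw [sigmoid_eq_real_sigmoid]
  rcases lt_trichotomy c 0 with hc | rfl | hc
  · simpa [hc.ne, hc.not_gt, Function.comp_def, div_eq_mul_inv] using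
      Real.tendsto_sigmoid_atBot.comp (tendsto_inv_nhdsGT_zero.const_mul_atTop_of_neg hc)
  · simp [Real.sigmoid_zero]
  · simpa [hc, hc.ne', Function.comp_def, div_eq_mul_inv] using
      Real.tendsto_sigmoid_atTop.comp (tendsto_inv_nhdsGT_zero.const_mul_atTop hc)

section SigmoidSum

variable {ι : Type*} [Fintype ι]

theorem tendsto_sum_sigmoid_sub_div_nhdsGT_zero {x : ι → ℝ} (hx : Function.Injective x)
    (i₀ : ι) :
    Tendsto (fun τ => ∑ i, sigmoid ((x i - x i₀) / τ)) (𝓝[>] 0)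
      (𝓝 (#{j | x i₀ < x j} + 1 / 2)) := by
  have hlim := tendsto_finsetSum univ fun i _ => tendsto_sigmoid_div_nhdsGT_zero (x i - x i₀)
  have hvalue : ∑ i, ((if 0 < x i - x i₀ then (1 : ℝ) else 0) +
      (if x i - x i₀ = 0 then 1 / 2 else 0)) = #{j | x i₀ < x j} + 1 / 2 := by
    rw [sum_add_distrib, sum_eq_single_of_mem i₀ (mem_univ _)
      fun i _ hi => if_neg (sub_ne_zero.2 (hx.ne hi))]
    simp only [sub_pos, sum_boole, sub_self, if_true]
  rwa [hvalue] at hlim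

theorem antitone_sum_sigmoid_sub_div (x : ι → ℝ) {τ : ℝ} (hτ : 0 < τ) :
    Antitone fun c => ∑ i, sigmoid ((x i - c) / τ) :=
  fun _ _ hcd => sum_le_sum fun _ _ =>
    sigmoid_monotone (div_le_div_of_nonneg_right (by linarith) hτ.le)

end SigmoidSum

theorem lml_dual_multiplier_between_general (n k : ℕ) (hk0 : 0 < k)
    (x : Fin n → ℝ) (hdist : Function.Injective x)
    (ν : ℝ → ℝ)
    (hν : ∀ τ : ℝ, 0 < τ → (∑ i, sigmoid ((x i + ν τ) / τ)) = k)
    (a b : ℝ)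
    (ha : ∃ i, x i = a ∧ (Finset.univ.filter fun j => a < x j).card = k - 1)
    (hb : ∃ i, x i = b ∧ (Finset.univ.filter fun j => b < x j).card = k) :
    ∀ᶠ τ in nhdsWithin (0 : ℝ) (Set.Ioi 0), b < -ν τ ∧ -ν τ < a := by
  obtain ⟨ia, rfl, hcard_a⟩ := ha
  obtain ⟨ib, rfl, hcard_b⟩ := hb
  have hlim_a := tendsto_sum_sigmoid_sub_div_nhdsGT_zero hdist ia
  have hlim_b := tendsto_sum_sigmoid_sub_div_nhdsGT_zero hdist ib
  rw [hcard_a, Nat.cast_pred hk0] at hlim_a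
  rw [hcard_b] at hlim_b
  filter_upwards [hlim_a.eventually_lt_const (by linarith : (k : ℝ) - 1 + 1 / 2 < k),
    hlim_b.eventually_const_lt (by linarith : (k : ℝ) < k + 1 / 2), self_mem_nhdsWithin]
    with τ hτa hτb hτ
  have hkτ : ∑ i, sigmoid ((x i - -ν τ) / τ) = k := by
    simpa only [sub_neg_eq_add] using hν τ hτ
  have hS := antitone_sum_sigmoid_sub_div x hτ
  exact ⟨hS.reflect_lt (hkτ ▸ hτb), hS.reflect_lt (hkτ ▸ hτa)⟩

/-- Let `x ∈ ℝⁿ` have pairwise distinct coordinates and `0 < k < n`. For each `τ > 0` let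
`ν τ` be the (unique) real with `∑ᵢ σ((xᵢ + ν τ)/τ) = k`. If `a` is the `k`-th largest
coordinate of `x` (exactly `k - 1` coordinates exceed it) and `b` is the `(k+1)`-th
largest coordinate (exactly `k` coordinates exceed it), then for all sufficiently small
`τ > 0` we have `b < -ν τ < a`. -/
theorem lml_dual_multiplier_between (n k : ℕ) (hn : 1 ≤ n) (hk0 : 0 < k) (hkn : k < n)
    (x : Fin n → ℝ) (hdist : Function.Injective x)
    (ν : ℝ → ℝ)
    (hν : ∀ τ : ℝ, 0 < τ → (∑ i, sigmoid ((x i + ν τ) / τ)) = k)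
    (a b : ℝ)
    (ha : ∃ i, x i = a ∧ (Finset.univ.filter fun j => a < x j).card = k - 1)
    (hb : ∃ i, x i = b ∧ (Finset.univ.filter fun j => b < x j).card = k) :
    ∀ᶠ τ in nhdsWithin (0 : ℝ) (Set.Ioi 0), b < -ν τ ∧ -ν τ < a :=
  lml_dual_multiplier_between_general n k hk0 x hdist ν hν a b ha hb
end

section
/- Let n ≥ 1, let k be an integer with 0 < k < n, and let x ∈ ℝⁿ. For τ > 0, let m(τ) denote the infimum of −xᵀy − τ·H_b(y) over {y ∈ ℝⁿ : 0 < yᵢ < 1, Σᵢ yᵢ = k}. Then m(τ) converges, as τ → 0⁺, to the negative of the sum of the k largest coordinates of x. -/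
open Finset Filter

/-- The binary entropy function `H_b(y) = -∑ i, [y i log (y i) + (1 - y i) log (1 - y i)]`. -/
noncomputable def binEntropy {n : ℕ} (y : Fin n → ℝ) : ℝ :=
  -(∑ i, (y i * Real.log (y i) + (1 - y i) * Real.log (1 - y i)))

/-- The sum of the `k` largest coordinates of `x ∈ ℝⁿ`: the sum of the first `k` entries
of `x` sorted in descending order. -/
noncomputable def sumTopK {n : ℕ} (x : Fin n → ℝ) (k : ℕ) : ℝ :=
  (((Multiset.ofList (List.ofFn x)).sort (· ≥ ·)).take k).sum

/-!
Since `0 ≤ H_b ≤ n log 2` on the box, `m(τ)` lies within `τ n log 2` of the value of the linear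
program `inf {-⟪x, y⟫ : y ∈ [0,1]ⁿ, ∑ yᵢ = k}`. That value is `-sumTopK x k`: a threshold
argument bounds `⟪x, y⟫` by the top-`k` sum, and equality holds at the indicator of a top-`k`
index set. This vertex lies only in the closure of the feasible set, but the objective is
continuous and the binary entropy vanishes at `0` and `1`, so it also bounds `m(τ)` from above.
-/

lemma sum_mul_le_sum_of_threshold {ι R : Type*} [Fintype ι] [CommRing R] [LinearOrder R]
    [IsStrictOrderedRing R] {x y : ι → R} {T : Finset ι} {t : R}
    (hT : ∀ i ∈ T, t ≤ x i) (hTc : ∀ i ∉ T, x i ≤ t)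
    (hy : ∀ i, y i ∈ Set.Icc 0 1) (hsum : ∑ i, y i = #T) :
    ∑ i, x i * y i ≤ ∑ i ∈ T, x i := by
  classical
  have hterm : ∀ i, x i * y i ≤ (if i ∈ T then x i else 0) + t * (y i - if i ∈ T then 1 else 0) := by
    intro i
    by_cases hi : i ∈ T
    · simp only [hi, if_true]
      nlinarith [hT i hi, (hy i).2]
    · simp only [hi, if_false]
      nlinarith [hTc i hi, (hy i).1]
  calc ∑ i, x i * y i ≤ ∑ i, ((if i ∈ T then x i else 0) + t * (y i - if i ∈ T then 1 else 0)) :=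
        sum_le_sum fun i _ => hterm i
    _ = ∑ i ∈ T, x i := by
        simp [sum_add_distrib, ← mul_sum, sum_sub_distrib, hsum]

lemma exists_perm_antitone_comp {α : Type*} [LinearOrder α] {n : ℕ} (x : Fin n → α) :
    ∃ e : Equiv.Perm (Fin n), Antitone (x ∘ e) :=
  ⟨Fin.revPerm.trans (Tuple.sort x), fun _ _ hij => Tuple.monotone_sort x (Fin.rev_le_rev.mpr hij)⟩

lemma sumTopK_eq_sum_of_antitone {n : ℕ} (x : Fin n → ℝ) (k : ℕ) (e : Equiv.Perm (Fin n))
    (he : Antitone (x ∘ e)) : sumTopK x k = ∑ j with j.val < k, x (e j) := by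
  have hsort : (Multiset.ofList (List.ofFn x)).sort (· ≥ ·) = List.ofFn (x ∘ e) := by
    refine List.Perm.eq_of_pairwise' (Multiset.pairwise_sort _ _) he.sortedGE_ofFn.pairwise ?_
    rw [← Multiset.coe_eq_coe, Multiset.sort_eq]
    exact Multiset.coe_eq_coe.mpr (e.ofFn_comp_perm x).symm
  rw [sumTopK, hsort, List.sum_take_ofFn]
  rfl

lemma exists_finset_sum_eq_sumTopK {n k : ℕ} (hkn : k < n) (x : Fin n → ℝ) :
    ∃ (T : Finset (Fin n)) (t : ℝ), #T = k ∧ (∀ i ∈ T, t ≤ x i) ∧ (∀ i ∉ T, x i ≤ t) ∧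
      ∑ i ∈ T, x i = sumTopK x k := by
  obtain ⟨e, he⟩ := exists_perm_antitone_comp x
  refine ⟨({j : Fin n | j.val < k} : Finset (Fin n)).map e.toEmbedding, x (e ⟨k, hkn⟩),
    ?_, ?_, ?_, ?_⟩
  · rw [card_map, Fin.card_filter_val_lt, min_eq_right hkn.le]
  · simp only [mem_map_equiv, mem_filter, mem_univ, true_and]
    intro i hi
    simpa using he (show e.symm i ≤ ⟨k, hkn⟩ from Fin.le_def.mpr hi.le)
  · simp only [mem_map_equiv, mem_filter, mem_univ, true_and, not_lt]
    intro i hi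
    simpa using he (show (⟨k, hkn⟩ : Fin n) ≤ e.symm i from Fin.le_def.mpr hi)
  · rw [sum_map, sumTopK_eq_sum_of_antitone x k e he]
    rfl

lemma binEntropy_eq_sum {n : ℕ} (y : Fin n → ℝ) :
    binEntropy y = ∑ i, Real.binEntropy (y i) := by
  simp only [binEntropy, Real.binEntropy, Real.log_inv, ← sum_neg_distrib]
  ring_nf

lemma binEntropy_le {n : ℕ} (y : Fin n → ℝ) : binEntropy y ≤ n * Real.log 2 := by
  rw [binEntropy_eq_sum]
  simpa using sum_le_sum fun i (_ : i ∈ univ) => Real.binEntropy_le_log_two (p := y i)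

lemma binEntropy_eq_zero_of_forall_eq_zero_or_one {n : ℕ} {z : Fin n → ℝ}
    (hz : ∀ i, z i = 0 ∨ z i = 1) :
    binEntropy z = 0 := by
  rw [binEntropy_eq_sum]
  exact sum_eq_zero fun i _ => Real.binEntropy_eq_zero.mpr (hz i)

/-- The relative interior of the hypersimplex `Δ(n, k) = {y ∈ [0,1]ⁿ : ∑ yᵢ = k}`. -/
def openHypersimplex (n k : ℕ) : Set (Fin n → ℝ) :=
  {y | (∀ i, y i ∈ Set.Ioo (0 : ℝ) 1) ∧ ∑ i, y i = k}

lemma openSegment_subset_openHypersimplex {n k : ℕ} {z c : Fin n → ℝ}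
    (hz : ∀ i, z i ∈ Set.Icc (0 : ℝ) 1) (hzk : ∑ i, z i = k) (hc : c ∈ openHypersimplex n k) :
    openSegment ℝ z c ⊆ openHypersimplex n k := by
  rintro _ ⟨a, b, ha, hb, hab, rfl⟩
  refine ⟨fun i => ?_, ?_⟩
  · have hci := hc.1 i
    have hzi := hz i
    simp only [Pi.add_apply, Pi.smul_apply, smul_eq_mul, Set.mem_Ioo]
    constructor <;> nlinarith [hci.1, hci.2, hzi.1, hzi.2]
  · simp [sum_add_distrib, ← mul_sum, hzk, hc.2, ← add_mul, hab]

lemma const_mem_openHypersimplex {n k : ℕ} (hk0 : 0 < k) (hkn : k < n) :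
    (fun _ => (k : ℝ) / n) ∈ openHypersimplex n k := by
  have hn : (0 : ℝ) < n := by exact_mod_cast hk0.trans hkn
  refine ⟨fun _ => ⟨by positivity, (div_lt_one hn).mpr (by exact_mod_cast hkn)⟩, ?_⟩
  simp [field]

lemma mem_closure_openHypersimplex {n k : ℕ} (hk0 : 0 < k) (hkn : k < n) {z : Fin n → ℝ}
    (hz : ∀ i, z i ∈ Set.Icc (0 : ℝ) 1) (hzk : ∑ i, z i = k) :
    z ∈ closure (openHypersimplex n k) :=
  closure_mono (openSegment_subset_openHypersimplex hz hzk (const_mem_openHypersimplex hk0 hkn))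
    (segment_subset_closure_openSegment (left_mem_segment ℝ z _))

lemma sInf_image_le_of_mem_closure {α : Type*} [TopologicalSpace α] {f : α → ℝ} {s : Set α} {z : α}
    (hf : Continuous f) (hb : BddBelow (f '' s)) (hz : z ∈ closure s) : sInf (f '' s) ≤ f z := by
  have : f '' closure s ⊆ Set.Ici (sInf (f '' s)) :=
    (image_closure_subset_closure_image hf).trans
      (isClosed_Ici.closure_subset_iff.mpr fun _ hv => csInf_le hb hv)
  exact this ⟨z, hz, rfl⟩

noncomputable def lmlObjective {n : ℕ} (x : Fin n → ℝ) (τ : ℝ) (y : Fin n → ℝ) : ℝ :=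
  -(∑ i, x i * y i) - τ * binEntropy y

lemma continuous_lmlObjective {n : ℕ} (x : Fin n → ℝ) (τ : ℝ) : Continuous (lmlObjective x τ) := by
  unfold lmlObjective
  simp only [binEntropy_eq_sum]
  fun_prop

lemma neg_sumTopK_sub_le_lmlObjective {n k : ℕ} (hkn : k < n) (x : Fin n → ℝ) {τ : ℝ}
    (hτ : 0 ≤ τ) {y : Fin n → ℝ} (hy : y ∈ openHypersimplex n k) :
    -sumTopK x k - τ * (n * Real.log 2) ≤ lmlObjective x τ y := by
  obtain ⟨T, t, hTcard, hT, hTc, hTsum⟩ := exists_finset_sum_eq_sumTopK hkn x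
  have hinner : ∑ i, x i * y i ≤ sumTopK x k := hTsum ▸
    sum_mul_le_sum_of_threshold hT hTc (fun i => Set.Ioo_subset_Icc_self (hy.1 i))
      (by rw [hy.2, hTcard])
  have hentropy : τ * binEntropy y ≤ τ * (n * Real.log 2) :=
    mul_le_mul_of_nonneg_left (binEntropy_le y) hτ
  rw [lmlObjective]
  linarith

lemma sInf_lmlObjective_le_neg_sumTopK {n k : ℕ} (hk0 : 0 < k) (hkn : k < n)
    (x : Fin n → ℝ) {τ : ℝ} (hτ : 0 ≤ τ) :
    sInf (lmlObjective x τ '' openHypersimplex n k) ≤ -sumTopK x k := by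
  classical
  obtain ⟨T, t, hTcard, -, -, hTsum⟩ := exists_finset_sum_eq_sumTopK hkn x
  set z : Fin n → ℝ := fun i => if i ∈ T then 1 else 0
  have hz : ∀ i, z i = 0 ∨ z i = 1 := fun i => by by_cases hi : i ∈ T <;> simp [z, hi]
  have hz01 : ∀ i, z i ∈ Set.Icc (0 : ℝ) 1 := fun i => by rcases hz i with h | h <;> simp [h]
  have hzk : ∑ i, z i = k := by simp [z, hTcard]
  have hbdd : BddBelow (lmlObjective x τ '' openHypersimplex n k) :=
    ⟨_, Set.forall_mem_image.mpr fun _ hy => neg_sumTopK_sub_le_lmlObjective hkn x hτ hy⟩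
  calc sInf (lmlObjective x τ '' openHypersimplex n k) ≤ lmlObjective x τ z :=
        sInf_image_le_of_mem_closure (continuous_lmlObjective x τ) hbdd
          (mem_closure_openHypersimplex hk0 hkn hz01 hzk)
    _ = -sumTopK x k := by
        simp [lmlObjective, binEntropy_eq_zero_of_forall_eq_zero_or_one hz, z, ← hTsum]

theorem lml_optimal_value_tendsto_neg_topk_sum_general (n k : ℕ)
    (hk0 : 0 < k) (hkn : k < n) (x : Fin n → ℝ) :
    Tendsto
      (fun τ : ℝ =>
        sInf ((fun y : Fin n → ℝ => -(∑ i, x i * y i) - τ * binEntropy y) ''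
          {y : Fin n → ℝ | (∀ i, y i ∈ Set.Ioo (0 : ℝ) 1) ∧ (∑ i, y i) = k}))
      (nhdsWithin 0 (Set.Ioi 0)) (nhds (-(sumTopK x k))) := by
  have lower : Tendsto (fun τ : ℝ => -sumTopK x k - τ * (n * Real.log 2))
      (nhdsWithin 0 (Set.Ioi 0)) (nhds (-sumTopK x k)) := by
    have h : Continuous fun τ : ℝ => -sumTopK x k - τ * (n * Real.log 2) := by fun_prop
    simpa using (h.tendsto 0).mono_left nhdsWithin_le_nhds
  refine tendsto_of_tendsto_of_tendsto_of_le_of_le' lower tendsto_const_nhds ?_ ?_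
  all_goals filter_upwards [self_mem_nhdsWithin] with τ (hτ : 0 < τ)
  · exact le_csInf ((Set.nonempty_of_mem (const_mem_openHypersimplex hk0 hkn)).image _)
      (Set.forall_mem_image.mpr fun _ hy => neg_sumTopK_sub_le_lmlObjective hkn x hτ.le hy)
  · exact sInf_lmlObjective_le_neg_sumTopK hk0 hkn x hτ.le

/-- For `0 < k < n`, `x ∈ ℝⁿ`, and `τ > 0`, let `m(τ)` be the infimum of
`-⟪x,y⟫ - τ·H_b(y)` over `{y : 0 < yᵢ < 1, ∑ᵢ yᵢ = k}`. Then `m(τ)` converges, as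
`τ → 0⁺`, to the negative of the sum of the `k` largest coordinates of `x`. -/
theorem lml_optimal_value_tendsto_neg_topk_sum (n k : ℕ) (hn : 1 ≤ n)
    (hk0 : 0 < k) (hkn : k < n) (x : Fin n → ℝ) :
    Tendsto
      (fun τ : ℝ =>
        sInf ((fun y : Fin n → ℝ => -(∑ i, x i * y i) - τ * binEntropy y) ''
          {y : Fin n → ℝ | (∀ i, y i ∈ Set.Ioo (0 : ℝ) 1) ∧ (∑ i, y i) = k}))
      (nhdsWithin 0 (Set.Ioi 0)) (nhds (-(sumTopK x k))) :=
  lml_optimal_value_tendsto_neg_topk_sum_general n k hk0 hkn x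
end
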